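/- arXiv:2110.02665 — 5 statements merged into one kernel-verified Lean document; each statement's English description precedes it below -/
import Mathlib

section
/- If λ is an eigenvalue of the characteristic matrix M(λ) = λI - H₀ - Σₖ(H₋ₖe^{-λτₖ} + Hₖe^{λτₖ}) with right eigenvector v₊ and left eigenvector w₊ (i.e., w₊ᵀM(λ) = 0), then -λ is also an eigenvalue, with right eigenvector Jw₊ and left eigenvector Jv₊. -/
open Matrix

noncomputable def Jre (n : ℕ) : Matrix (Fin n ⊕ Fin n) (Fin n ⊕ Fin n) ℝ :=
  Matrix.fromBlocks 0 1 (-1) 0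

noncomputable def JC (n : ℕ) : Matrix (Fin n ⊕ Fin n) (Fin n ⊕ Fin n) ℂ :=
  (Jre n).map ((↑) : ℝ → ℂ)

/-- The characteristic matrix M(λ) = λI - H₀ - Σₖ (H₋ₖ e^{-λτₖ} + Hₖ e^{λτₖ}). -/
noncomputable def Mchar {n K : ℕ}
    (H0 : Matrix (Fin n ⊕ Fin n) (Fin n ⊕ Fin n) ℝ)
    (Hp Hm : Fin (K + 1) → Matrix (Fin n ⊕ Fin n) (Fin n ⊕ Fin n) ℝ)
    (τ : Fin (K + 1) → ℝ) (lam : ℂ) :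
    Matrix (Fin n ⊕ Fin n) (Fin n ⊕ Fin n) ℂ :=
  lam • (1 : Matrix (Fin n ⊕ Fin n) (Fin n ⊕ Fin n) ℂ)
    - H0.map ((↑) : ℝ → ℂ)
    - ∑ k, (Complex.exp (-lam * τ k) • (Hm k).map ((↑) : ℝ → ℂ)
          + Complex.exp (lam * τ k) • (Hp k).map ((↑) : ℝ → ℂ))

lemma JC_eq (n : ℕ) : JC n = (Complex.ofRealHom).mapMatrix (Jre n) := rfl

lemma Jre_transpose (n : ℕ) : (Jre n)ᵀ = -(Jre n) := by
  simp [Jre, Matrix.fromBlocks_transpose, Matrix.fromBlocks_neg]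

lemma Jre_mul_Jre (n : ℕ) : Jre n * Jre n = -1 := by
  rw [show ((-1 : Matrix (Fin n ⊕ Fin n) (Fin n ⊕ Fin n) ℝ)) = Matrix.fromBlocks (-1) 0 0 (-1) by
    simp [Matrix.fromBlocks_neg, ← Matrix.fromBlocks_one]]
  simp [Jre, Matrix.fromBlocks_multiply]

lemma JC_transpose (n : ℕ) : (JC n)ᵀ = -(JC n) := by
  rw [JC_eq, RingHom.mapMatrix_apply, ← Matrix.transpose_map, Jre_transpose]
  ext i j; simp [Matrix.map]

lemma JC_mul_JC (n : ℕ) : JC n * JC n = -1 := by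
  rw [JC_eq, ← _root_.map_mul, Jre_mul_Jre, map_neg, _root_.map_one]

lemma mapC_mul {m : Type*} [Fintype m] (A B : Matrix m m ℝ) :
    (A * B).map ((↑) : ℝ → ℂ) = A.map ((↑) : ℝ → ℂ) * B.map ((↑) : ℝ → ℂ) := by
  ext i j; simp [Matrix.mul_apply]

lemma conj_lemma {n : ℕ} (A B : Matrix (Fin n ⊕ Fin n) (Fin n ⊕ Fin n) ℂ)
    (h : (JC n * A)ᵀ = JC n * B) : JC n * Aᵀ * JC n = B := by
  rw [Matrix.transpose_mul, JC_transpose, Matrix.mul_neg] at h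
  have h1 : Aᵀ * JC n = -(JC n * B) := neg_eq_iff_eq_neg.mp h
  calc JC n * Aᵀ * JC n = JC n * (Aᵀ * JC n) := by rw [Matrix.mul_assoc]
    _ = -(JC n * (JC n * B)) := by rw [h1, Matrix.mul_neg]
    _ = B := by rw [← Matrix.mul_assoc, JC_mul_JC]; simp

lemma key {n K : ℕ}
    (H0 : Matrix (Fin n ⊕ Fin n) (Fin n ⊕ Fin n) ℝ)
    (Hp Hm : Fin (K + 1) → Matrix (Fin n ⊕ Fin n) (Fin n ⊕ Fin n) ℝ)
    (τ : Fin (K + 1) → ℝ)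
    (hH0 : (Jre n * H0)ᵀ = Jre n * H0)
    (hHk : ∀ k, (Jre n * Hm k)ᵀ = Jre n * Hp k) (lam : ℂ) :
    Mchar H0 Hp Hm τ (-lam) = JC n * (Mchar H0 Hp Hm τ lam)ᵀ * JC n := by
  have e0 : JC n * (H0.map ((↑) : ℝ → ℂ))ᵀ * JC n = H0.map ((↑) : ℝ → ℂ) := by
    apply conj_lemma
    rw [JC, ← mapC_mul, ← Matrix.transpose_map, hH0, mapC_mul]
  have em : ∀ k, JC n * ((Hm k).map ((↑) : ℝ → ℂ))ᵀ * JC n = (Hp k).map ((↑) : ℝ → ℂ) := by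
    intro k; apply conj_lemma
    rw [JC, ← mapC_mul, ← Matrix.transpose_map, hHk k, mapC_mul]
  have ep : ∀ k, JC n * ((Hp k).map ((↑) : ℝ → ℂ))ᵀ * JC n = (Hm k).map ((↑) : ℝ → ℂ) := by
    intro k; apply conj_lemma
    have := congrArg Matrix.transpose (hHk k)
    rw [Matrix.transpose_transpose] at this
    rw [JC, ← mapC_mul, ← Matrix.transpose_map, ← this, mapC_mul]
  unfold Mchar
  rw [Matrix.transpose_sub, Matrix.transpose_sub, Matrix.transpose_smul, Matrix.transpose_one,
    Matrix.transpose_sum]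
  simp only [Matrix.transpose_add, Matrix.transpose_smul]
  rw [Matrix.mul_sub, Matrix.sub_mul, Matrix.mul_sub, Matrix.sub_mul,
    Finset.mul_sum, Finset.sum_mul]
  simp only [Matrix.mul_add, Matrix.add_mul, Matrix.mul_smul, Matrix.smul_mul]
  rw [Matrix.mul_one, JC_mul_JC]
  congr 1
  · congr 1
    · simp [neg_smul, smul_neg]
    · exact e0.symm
  · apply Finset.sum_congr rfl
    intro k _
    rw [em k, ep k]
    simp only [neg_neg]
    rw [add_comm]

lemma JC_mulVec_ne {n : ℕ} (x : (Fin n ⊕ Fin n) → ℂ) (hx : x ≠ 0) : JC n *ᵥ x ≠ 0 := by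
  intro h
  apply hx
  have h2 := congrArg (fun y => JC n *ᵥ y) h
  simp only [Matrix.mulVec_mulVec, JC_mul_JC, Matrix.mulVec_zero] at h2
  rw [Matrix.neg_mulVec, Matrix.one_mulVec, neg_eq_zero] at h2
  exact h2

theorem stmt0 {n K : ℕ} (hn : 0 < n)
    (H0 : Matrix (Fin n ⊕ Fin n) (Fin n ⊕ Fin n) ℝ)
    (Hp Hm : Fin (K + 1) → Matrix (Fin n ⊕ Fin n) (Fin n ⊕ Fin n) ℝ)
    (τ : Fin (K + 1) → ℝ) (hτpos : ∀ k, 0 < τ k) (hτmono : StrictMono τ)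
    (hH0 : (Jre n * H0)ᵀ = Jre n * H0)
    (hHk : ∀ k, (Jre n * Hm k)ᵀ = Jre n * Hp k)
    (lam : ℂ) (v w : (Fin n ⊕ Fin n) → ℂ) (hv : v ≠ 0) (hw : w ≠ 0)
    (hright : (Mchar H0 Hp Hm τ lam) *ᵥ v = 0)
    (hleft : w ᵥ* (Mchar H0 Hp Hm τ lam) = 0) :
    (JC n *ᵥ w) ≠ 0 ∧ (JC n *ᵥ v) ≠ 0 ∧
    (Mchar H0 Hp Hm τ (-lam)) *ᵥ (JC n *ᵥ w) = 0 ∧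
    (JC n *ᵥ v) ᵥ* (Mchar H0 Hp Hm τ (-lam)) = 0 := by

  have hkey := key H0 Hp Hm τ hH0 hHk lam
  have hMt : (Mchar H0 Hp Hm τ lam)ᵀ *ᵥ w = 0 := by
    rw [Matrix.mulVec_transpose, hleft]
  refine ⟨JC_mulVec_ne w hw, JC_mulVec_ne v hv, ?_, ?_⟩
  · rw [hkey, Matrix.mulVec_mulVec, Matrix.mul_assoc (JC n * _), JC_mul_JC,
      Matrix.mul_neg, Matrix.mul_one, Matrix.neg_mulVec, ← Matrix.mulVec_mulVec, hMt,
      Matrix.mulVec_zero, neg_zero]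
  · rw [← Matrix.mulVec_transpose]
    have ht : (Mchar H0 Hp Hm τ (-lam))ᵀ = JC n * Mchar H0 Hp Hm τ lam * JC n := by
      rw [hkey, Matrix.transpose_mul, Matrix.transpose_mul, Matrix.transpose_transpose,
        JC_transpose]
      simp [Matrix.mul_assoc, Matrix.neg_mul, Matrix.mul_neg]
    rw [ht, Matrix.mulVec_mulVec, Matrix.mul_assoc (JC n * _), JC_mul_JC,
      Matrix.mul_neg, Matrix.mul_one, Matrix.neg_mulVec, ← Matrix.mulVec_mulVec, hright,
      Matrix.mulVec_zero, neg_zero]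
end

section
/- Let H be a real Hamiltonian matrix and σ purely real or purely imaginary with ±σ not eigenvalues of H. Then the Krylov subspace K_m(R_σ⁻¹, q₁) = span{q₁, R_σ⁻¹q₁, ..., R_σ^{-(m-1)}q₁} generated from a real starting vector q₁ is J-neutral: for all x, y in the subspace, xᵀJy = 0. -/
open Matrix

theorem stmt2 {n : ℕ} (H : Matrix (Fin n ⊕ Fin n) (Fin n ⊕ Fin n) ℝ)
    (hHam : (Jre n * H)ᵀ = Jre n * H)
    (σ : ℂ) (hσ : σ.im = 0 ∨ σ.re = 0)
    (Hc : Matrix (Fin n ⊕ Fin n) (Fin n ⊕ Fin n) ℂ)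
    (hHc : Hc = H.map ((↑) : ℝ → ℂ))
    (h1 : IsUnit (Hc - σ • (1 : Matrix (Fin n ⊕ Fin n) (Fin n ⊕ Fin n) ℂ)))
    (h2 : IsUnit (Hc + σ • (1 : Matrix (Fin n ⊕ Fin n) (Fin n ⊕ Fin n) ℂ)))
    (Rinv : Matrix (Fin n ⊕ Fin n) (Fin n ⊕ Fin n) ℂ)
    (hR : Rinv = (Hc + σ • 1)⁻¹ * (Hc - σ • 1)⁻¹)
    (q1 : (Fin n ⊕ Fin n) → ℝ) (m : ℕ)
    (x y : (Fin n ⊕ Fin n) → ℂ)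
    (hx : x ∈ Submodule.span ℂ
      {z : (Fin n ⊕ Fin n) → ℂ | ∃ j < m, z = (Rinv ^ j) *ᵥ (fun i => (q1 i : ℂ))})
    (hy : y ∈ Submodule.span ℂ
      {z : (Fin n ⊕ Fin n) → ℂ | ∃ j < m, z = (Rinv ^ j) *ᵥ (fun i => (q1 i : ℂ))}) :
    x ⬝ᵥ (JC n *ᵥ y) = 0 := by
  set J := JC n with hJdef
  set A := Hc + σ • (1 : Matrix (Fin n ⊕ Fin n) (Fin n ⊕ Fin n) ℂ) with hAdef
  set B := Hc - σ • (1 : Matrix (Fin n ⊕ Fin n) (Fin n ⊕ Fin n) ℂ) with hBdef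
  -- J is skew-symmetric
  have hJret : (Jre n)ᵀ = -(Jre n) := by
    rw [Jre, Matrix.fromBlocks_transpose]
    ext i j
    rcases i with i | i <;> rcases j with j | j <;>
      simp [Matrix.fromBlocks]
  have hJt : Jᵀ = -J := by
    rw [hJdef, JC, ← Matrix.transpose_map, hJret]
    ext i j
    simp [Matrix.map_apply]
  -- Hamiltonian property over ℂ
  have hmap : ∀ (M N : Matrix (Fin n ⊕ Fin n) (Fin n ⊕ Fin n) ℝ),
      (M * N).map ((↑) : ℝ → ℂ) = M.map ((↑) : ℝ → ℂ) * N.map ((↑) : ℝ → ℂ) := by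
    intro M N
    exact Matrix.map_mul (f := Complex.ofRealHom)
  have hHamR : Hᵀ * Jre n = -(Jre n * H) := by
    have h := hHam
    rw [Matrix.transpose_mul, hJret, Matrix.mul_neg] at h
    rw [← h, neg_neg]
  have hnegmap : ∀ (M : Matrix (Fin n ⊕ Fin n) (Fin n ⊕ Fin n) ℝ),
      (-M).map ((↑) : ℝ → ℂ) = -(M.map ((↑) : ℝ → ℂ)) := by
    intro M; ext i j; simp [Matrix.map_apply, Matrix.neg_apply]
  have hHamC : Hcᵀ * J = -(J * Hc) := by
    have h := congrArg (fun M => M.map ((↑) : ℝ → ℂ)) hHamR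
    simp only [hmap, hnegmap] at h
    rw [hHc, hJdef, JC, ← Matrix.transpose_map]
    exact h
  have hsJ : (σ • (1 : Matrix (Fin n ⊕ Fin n) (Fin n ⊕ Fin n) ℂ)) * J = σ • J := by
    rw [Matrix.smul_mul, Matrix.one_mul]
  have hJs : J * (σ • (1 : Matrix (Fin n ⊕ Fin n) (Fin n ⊕ Fin n) ℂ)) = σ • J := by
    rw [Matrix.mul_smul, Matrix.mul_one]
  have hAJ : Aᵀ * J = -(J * B) := by
    rw [hAdef, hBdef, Matrix.transpose_add, Matrix.transpose_smul, Matrix.transpose_one,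
      Matrix.add_mul, Matrix.mul_sub, hHamC, hsJ, hJs]
    abel
  have hBJ : Bᵀ * J = -(J * A) := by
    rw [hAdef, hBdef, Matrix.transpose_sub, Matrix.transpose_smul, Matrix.transpose_one,
      Matrix.sub_mul, Matrix.mul_add, hHamC, hsJ, hJs]
    abel
  -- inverse facts
  have hAd : IsUnit A.det := (Matrix.isUnit_iff_isUnit_det A).mp h2
  have hBd : IsUnit B.det := (Matrix.isUnit_iff_isUnit_det B).mp h1
  have hAi' : A * A⁻¹ = 1 := Matrix.mul_nonsing_inv A hAd
  have hBi' : B * B⁻¹ = 1 := Matrix.mul_nonsing_inv B hBd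
  have hAt1 : (A⁻¹)ᵀ * Aᵀ = 1 := by
    rw [← Matrix.transpose_mul, hAi', Matrix.transpose_one]
  have hBt1 : (B⁻¹)ᵀ * Bᵀ = 1 := by
    rw [← Matrix.transpose_mul, hBi', Matrix.transpose_one]
  have hAJ' : J * B = -(Aᵀ * J) := by rw [hAJ, neg_neg]
  have hBJ' : J * A = -(Bᵀ * J) := by rw [hBJ, neg_neg]
  have hAiJ : (A⁻¹)ᵀ * J = -(J * B⁻¹) := by
    calc (A⁻¹)ᵀ * J = (A⁻¹)ᵀ * (J * B * B⁻¹) := by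
          rw [Matrix.mul_assoc J B B⁻¹, hBi', Matrix.mul_one]
      _ = (A⁻¹)ᵀ * (-(Aᵀ * J) * B⁻¹) := by rw [hAJ']
      _ = -((A⁻¹)ᵀ * Aᵀ * (J * B⁻¹)) := by
          simp only [Matrix.neg_mul, Matrix.mul_neg, Matrix.mul_assoc]
      _ = -(J * B⁻¹) := by rw [hAt1, Matrix.one_mul]
  have hBiJ : (B⁻¹)ᵀ * J = -(J * A⁻¹) := by
    calc (B⁻¹)ᵀ * J = (B⁻¹)ᵀ * (J * A * A⁻¹) := by
          rw [Matrix.mul_assoc J A A⁻¹, hAi', Matrix.mul_one]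
      _ = (B⁻¹)ᵀ * (-(Bᵀ * J) * A⁻¹) := by rw [hBJ']
      _ = -((B⁻¹)ᵀ * Bᵀ * (J * A⁻¹)) := by
          simp only [Matrix.neg_mul, Matrix.mul_neg, Matrix.mul_assoc]
      _ = -(J * A⁻¹) := by rw [hBt1, Matrix.one_mul]
  -- the key symmetry of Rinv
  have hRJ : Rinvᵀ * J = J * Rinv := by
    calc Rinvᵀ * J = (B⁻¹)ᵀ * ((A⁻¹)ᵀ * J) := by
          rw [hR, Matrix.transpose_mul, Matrix.mul_assoc]
      _ = -((B⁻¹)ᵀ * J * B⁻¹) := by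
          rw [hAiJ]; simp only [Matrix.mul_neg, Matrix.mul_assoc]
      _ = J * A⁻¹ * B⁻¹ := by
          rw [hBiJ]; simp only [Matrix.neg_mul, neg_neg]
      _ = J * Rinv := by rw [hR, Matrix.mul_assoc]
  have hpow : ∀ j : ℕ, (Rinv ^ j)ᵀ * J = J * Rinv ^ j := by
    intro j
    induction j with
    | zero => simp
    | succ k ih =>
        rw [pow_succ', Matrix.transpose_mul, Matrix.mul_assoc, hRJ, ← Matrix.mul_assoc, ih,
          Matrix.mul_assoc, ← pow_succ, ← pow_succ']
  -- skewness of J * Rinv^s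
  have hskew : ∀ s : ℕ, (J * Rinv ^ s)ᵀ = -(J * Rinv ^ s) := by
    intro s
    rw [Matrix.transpose_mul, hJt, Matrix.mul_neg, hpow]
  -- quadratic form of a skew matrix vanishes
  have hquad : ∀ (S : Matrix (Fin n ⊕ Fin n) (Fin n ⊕ Fin n) ℂ), Sᵀ = -S →
      ∀ v : (Fin n ⊕ Fin n) → ℂ, v ⬝ᵥ (S *ᵥ v) = 0 := by
    intro S hS v
    have h1' : v ⬝ᵥ (S *ᵥ v) = (Sᵀ *ᵥ v) ⬝ᵥ v := by
      rw [Matrix.dotProduct_mulVec, Matrix.mulVec_transpose]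
    have h2' : (Sᵀ *ᵥ v) ⬝ᵥ v = -(v ⬝ᵥ (S *ᵥ v)) := by
      rw [hS, Matrix.neg_mulVec, neg_dotProduct, dotProduct_comm]
    have h3 := h1'.trans h2'
    linear_combination h3 / 2
  -- generators pair to zero
  set qC : (Fin n ⊕ Fin n) → ℂ := fun i => (q1 i : ℂ) with hqC
  have hgen : ∀ j k : ℕ, (Rinv ^ j *ᵥ qC) ⬝ᵥ (J *ᵥ (Rinv ^ k *ᵥ qC)) = 0 := by
    intro j k
    have e1 : J *ᵥ (Rinv ^ k *ᵥ qC) = (J * Rinv ^ k) *ᵥ qC := by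
      rw [Matrix.mulVec_mulVec]
    have e3 : Rinv ^ j *ᵥ qC = qC ᵥ* (Rinv ^ j)ᵀ := by
      simpa using (Matrix.mulVec_transpose ((Rinv ^ j)ᵀ) qC)
    rw [e1, e3, ← Matrix.dotProduct_mulVec, Matrix.mulVec_mulVec, ← Matrix.mul_assoc,
      hpow j, Matrix.mul_assoc, ← pow_add]
    exact hquad _ (hskew (j + k)) qC
  -- bilinearity: reduce to generators
  have key : ∀ u ∈ Submodule.span ℂ
      {z : (Fin n ⊕ Fin n) → ℂ | ∃ j < m, z = (Rinv ^ j) *ᵥ qC},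
      ∀ v ∈ Submodule.span ℂ
      {z : (Fin n ⊕ Fin n) → ℂ | ∃ j < m, z = (Rinv ^ j) *ᵥ qC},
      u ⬝ᵥ (J *ᵥ v) = 0 := by
    intro u hu
    induction hu using Submodule.span_induction with
    | mem u hmem =>
        intro v hv
        induction hv using Submodule.span_induction with
        | mem v hmem' =>
            obtain ⟨j, _, rfl⟩ := hmem
            obtain ⟨k, _, rfl⟩ := hmem'
            exact hgen j k
        | zero => simp
        | add v w _ _ ihv ihw => rw [Matrix.mulVec_add, dotProduct_add, ihv, ihw, add_zero]
        | smul c v _ ihv => rw [Matrix.mulVec_smul, dotProduct_smul, ihv, smul_zero]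
    | zero => intro v hv; simp
    | add u w _ _ ihu ihw =>
        intro v hv
        rw [add_dotProduct, ihu v hv, ihw v hv, add_zero]
    | smul c u _ ihu =>
        intro v hv
        rw [smul_dotProduct, ihu v hv, smul_zero]
  exact key x hx y hy
end

section
/- Let H be a real Hamiltonian matrix, σ purely real or imaginary with ±σ not eigenvalues of H, q₁ a real vector, λ ≠ 0 a simple eigenvalue of H with right eigenvector v₊, and v₋ a right eigenvector of H for eigenvalue -λ. Then the intersection of span{v₊, v₋} with the Krylov subspace K_m(R_σ⁻¹, q₁) has dimension at most 1. -/
open Matrix Polynomial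

private lemma inv_mulVec_eig {ι : Type*} [Fintype ι] [DecidableEq ι]
    {A : Matrix ι ι ℂ} (hA : IsUnit A) {v : ι → ℂ} (hv : v ≠ 0) {c : ℂ}
    (h : A *ᵥ v = c • v) : A⁻¹ *ᵥ v = c⁻¹ • v := by
  have hAinv : A⁻¹ *ᵥ (A *ᵥ v) = v := by
    rw [mulVec_mulVec, Matrix.nonsing_inv_mul A ((Matrix.isUnit_iff_isUnit_det A).mp hA),
      one_mulVec]
  rw [h, mulVec_smul] at hAinv
  have hc : c ≠ 0 := by
    rintro rfl
    rw [zero_smul] at hAinv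
    exact hv hAinv.symm
  have h2 : A⁻¹ *ᵥ v = c⁻¹ • (c • (A⁻¹ *ᵥ v)) := by
    rw [smul_smul, inv_mul_cancel₀ hc, one_smul]
  rw [h2, hAinv]

private lemma mulVecLin_pow {ι : Type*} [Fintype ι] [DecidableEq ι]
    (A : Matrix ι ι ℂ) (j : ℕ) :
    (Matrix.mulVecLin A) ^ j = Matrix.mulVecLin (A ^ j) := by
  induction j with
  | zero => rw [pow_zero, pow_zero, Matrix.mulVecLin_one]; rfl
  | succ k ih =>
      rw [pow_succ, pow_succ, ih, Matrix.mulVecLin_mul]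
      rfl

private lemma aeval_smul_of_eig {V : Type*} [AddCommGroup V] [Module ℂ V]
    (T : Module.End ℂ V) {μ : ℂ} {v : V} (h : T v = μ • v) (s : Polynomial ℂ) :
    (Polynomial.aeval T s) v = s.eval μ • v := by
  induction s using Polynomial.induction_on' with
  | add p q hp hq => simp [hp, hq, add_smul]
  | monomial k a =>
      have hk : (T ^ k) v = μ ^ k • v := by
        induction k with
        | zero => simp
        | succ j ih =>
            rw [pow_succ', pow_succ', Module.End.mul_apply, ih]
            simp [LinearMap.map_smul, h, smul_smul, mul_comm]
      simp [Polynomial.aeval_monomial, Module.End.mul_apply, hk,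
        Module.algebraMap_end_apply, Polynomial.eval_monomial, smul_smul, mul_comm,
        mul_left_comm]

theorem stmt3 {n : ℕ} (H : Matrix (Fin n ⊕ Fin n) (Fin n ⊕ Fin n) ℝ)
    (hHam : (Jre n * H)ᵀ = Jre n * H)
    (σ : ℂ) (hσ : σ.im = 0 ∨ σ.re = 0)
    (Hc : Matrix (Fin n ⊕ Fin n) (Fin n ⊕ Fin n) ℂ)
    (hHc : Hc = H.map ((↑) : ℝ → ℂ))
    (h1 : IsUnit (Hc - σ • (1 : Matrix (Fin n ⊕ Fin n) (Fin n ⊕ Fin n) ℂ)))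
    (h2 : IsUnit (Hc + σ • (1 : Matrix (Fin n ⊕ Fin n) (Fin n ⊕ Fin n) ℂ)))
    (Rinv : Matrix (Fin n ⊕ Fin n) (Fin n ⊕ Fin n) ℂ)
    (hR : Rinv = (Hc + σ • 1)⁻¹ * (Hc - σ • 1)⁻¹)
    (q1 : (Fin n ⊕ Fin n) → ℝ) (m : ℕ)
    (lam : ℂ) (hlam : lam ≠ 0)
    (hsimple : (Matrix.charpoly Hc).rootMultiplicity lam = 1)
    (vp vm : (Fin n ⊕ Fin n) → ℂ) (hvp : vp ≠ 0) (hvm : vm ≠ 0)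
    (heigp : Hc *ᵥ vp = lam • vp) (heigm : Hc *ᵥ vm = (-lam) • vm) :
    Module.finrank ℂ
      ↥(Submodule.span ℂ ({vp, vm} : Set ((Fin n ⊕ Fin n) → ℂ)) ⊓
        Submodule.span ℂ
          {z : (Fin n ⊕ Fin n) → ℂ | ∃ j < m, z = (Rinv ^ j) *ᵥ (fun i => (q1 i : ℂ))})
      ≤ 1 := by
  classical
  set qc : (Fin n ⊕ Fin n) → ℂ := (fun i => (q1 i : ℂ)) with hqc
  set T : Module.End ℂ ((Fin n ⊕ Fin n) → ℂ) := Matrix.mulVecLin Rinv with hT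
  set μ : ℂ := (lam - σ)⁻¹ * (lam + σ)⁻¹ with hμ
  -- eigen computations
  have hsub : ∀ (c : ℂ) (v : (Fin n ⊕ Fin n) → ℂ), Hc *ᵥ v = c • v → (Hc - σ • 1) *ᵥ v = (c - σ) • v := by
    intro c v hv
    rw [sub_mulVec, hv, smul_mulVec, one_mulVec, sub_smul]
  have hadd : ∀ (c : ℂ) (v : (Fin n ⊕ Fin n) → ℂ), Hc *ᵥ v = c • v → (Hc + σ • 1) *ᵥ v = (c + σ) • v := by
    intro c v hv
    rw [add_mulVec, hv, smul_mulVec, one_mulVec, add_smul]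
  have hRv : ∀ (c : ℂ) (v : (Fin n ⊕ Fin n) → ℂ), v ≠ 0 → Hc *ᵥ v = c • v →
      Rinv *ᵥ v = ((c - σ)⁻¹ * (c + σ)⁻¹) • v := by
    intro c v hv0 hv
    have e1 : (Hc - σ • 1)⁻¹ *ᵥ v = (c - σ)⁻¹ • v := inv_mulVec_eig h1 hv0 (hsub c v hv)
    have e2 : (Hc + σ • 1)⁻¹ *ᵥ v = (c + σ)⁻¹ • v := inv_mulVec_eig h2 hv0 (hadd c v hv)
    rw [hR, ← mulVec_mulVec, e1, mulVec_smul, e2, smul_smul]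
  have hTp : T vp = μ • vp := by
    simpa [hT, Matrix.mulVecLin_apply, hμ] using hRv lam vp hvp heigp
  have hTm : T vm = μ • vm := by
    have := hRv (-lam) vm hvm heigm
    rw [hT]
    simp only [Matrix.mulVecLin_apply, this, hμ]
    congr 1
    rw [show -lam - σ = -(lam + σ) by ring, show -lam + σ = -(lam - σ) by ring,
      inv_neg, inv_neg]
    ring
  -- the polynomial evaluation map
  set Φ : Polynomial ℂ →ₗ[ℂ] ((Fin n ⊕ Fin n) → ℂ) :=
    { toFun := fun p => (Polynomial.aeval T p) qc
      map_add' := by intro p q; simp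
      map_smul' := by intro r p; simp } with hΦ
  -- the annihilator ideal
  set I : Ideal (Polynomial ℂ) :=
    { carrier := {p | (Polynomial.aeval T p) qc = 0}
      add_mem' := by
        intro a b ha hb
        simp only [Set.mem_setOf_eq, map_add, LinearMap.add_apply] at *
        rw [ha, hb, add_zero]
      zero_mem' := by simp
      smul_mem' := by
        intro r p hp
        simp only [Set.mem_setOf_eq, smul_eq_mul, _root_.map_mul, Module.End.mul_apply] at *
        rw [hp, map_zero] } with hI
  set g : Polynomial ℂ := Submodule.IsPrincipal.generator I with hg
  have hgmem : g ∈ I := Submodule.IsPrincipal.generator_mem I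
  have hmemI : ∀ p : Polynomial ℂ, p ∈ I ↔ g ∣ p := by
    intro p; exact Submodule.IsPrincipal.mem_iff_generator_dvd I
  obtain ⟨g₁, hw1, hw2⟩ : ∃ g₁ : Polynomial ℂ, ((X - C μ) * g₁ ∈ I) ∧
      ∀ p : Polynomial ℂ, (X - C μ) * p ∈ I → g₁ ∣ p := by
    by_cases hdvd : (X - C μ) ∣ g
    · obtain ⟨g₁, hgeq⟩ := hdvd
      refine ⟨g₁, by rw [← hgeq]; exact hgmem, ?_⟩
      intro p hp
      rw [hmemI, hgeq] at hp
      exact (mul_dvd_mul_iff_left (X_sub_C_ne_zero μ)).mp hp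
    · refine ⟨g, Ideal.mul_mem_left I _ hgmem, ?_⟩
      intro p hp
      rw [hmemI] at hp
      have hcop : IsCoprime (X - C μ) g :=
        ((Polynomial.prime_X_sub_C μ).coprime_iff_not_dvd).mpr hdvd
      exact hcop.symm.dvd_of_dvd_mul_left hp
  set w : (Fin n ⊕ Fin n) → ℂ := Φ g₁ with hw
  have hwE : T w = μ • w := by
    have h0 : (Polynomial.aeval T ((X - C μ) * g₁)) qc = 0 := hw1
    rw [_root_.map_mul, Module.End.mul_apply, map_sub, aeval_X, aeval_C] at h0
    have : T (Φ g₁) - μ • (Φ g₁) = 0 := by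
      exact (by simpa [Module.algebraMap_end_apply, LinearMap.sub_apply] using h0 :
        T ((Polynomial.aeval T g₁) qc) - μ • ((Polynomial.aeval T g₁) qc) = 0)
    rw [sub_eq_zero] at this
    exact this
  -- main inclusion
  have hmain : Submodule.span ℂ ({vp, vm} : Set ((Fin n ⊕ Fin n) → ℂ)) ⊓
      Submodule.span ℂ
        {z : (Fin n ⊕ Fin n) → ℂ | ∃ j < m, z = (Rinv ^ j) *ᵥ qc} ≤ Submodule.span ℂ {w} := by
    rintro x hx
    obtain ⟨hxW, hxK⟩ := Submodule.mem_inf.mp hx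
    -- x is an eigenvector (or zero) for T with eigenvalue μ
    have hxE : T x = μ • x := by
      have hle : Submodule.span ℂ ({vp, vm} : Set ((Fin n ⊕ Fin n) → ℂ)) ≤
          LinearMap.ker (T - μ • (1 : Module.End ℂ ((Fin n ⊕ Fin n) → ℂ))) := by
        rw [Submodule.span_le]
        rintro y (rfl | rfl) <;>
          simp [LinearMap.mem_ker, LinearMap.sub_apply, hTp, hTm]
      have := hle hxW
      rw [LinearMap.mem_ker, LinearMap.sub_apply, sub_eq_zero] at this
      simpa using this
    -- x is in the range of Φ
    have hxR : ∃ p : Polynomial ℂ, Φ p = x := by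
      have hle : Submodule.span ℂ {z : (Fin n ⊕ Fin n) → ℂ | ∃ j < m, z = (Rinv ^ j) *ᵥ qc} ≤
          LinearMap.range Φ := by
        rw [Submodule.span_le]
        rintro z ⟨j, hj, rfl⟩
        refine ⟨X ^ j, ?_⟩
        simp only [hΦ, LinearMap.coe_mk, AddHom.coe_mk, map_pow, aeval_X]
        rw [hT, mulVecLin_pow]
        rfl
      exact hle hxK
    obtain ⟨p, hp⟩ := hxR
    have hpI : (X - C μ) * p ∈ I := by
      show (Polynomial.aeval T ((X - C μ) * p)) qc = 0
      rw [_root_.map_mul, Module.End.mul_apply, map_sub, aeval_X, aeval_C]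
      have : (Polynomial.aeval T p) qc = x := hp
      rw [this]
      simp [Module.algebraMap_end_apply, hxE]
    obtain ⟨s, hs⟩ := hw2 p hpI
    have hx' : x = s.eval μ • w := by
      rw [← hp, hs]
      show (Polynomial.aeval T (g₁ * s)) qc = s.eval μ • w
      rw [mul_comm, _root_.map_mul, Module.End.mul_apply]
      have : (Polynomial.aeval T g₁) qc = w := rfl
      rw [this]
      exact aeval_smul_of_eig T hwE s
    rw [hx']
    exact Submodule.smul_mem _ _ (Submodule.mem_span_singleton_self w)
  have hfin : Module.finrank ℂ (Submodule.span ℂ ({w} : Set ((Fin n ⊕ Fin n) → ℂ))) ≤ 1 := by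
    by_cases hw0 : w = 0
    · rw [hw0, Submodule.span_zero_singleton]
      simp
    · rw [finrank_span_singleton hw0]
  exact le_trans (Submodule.finrank_mono hmain) hfin
end

section
/- For continuously differentiable functions φ, ψ: [-τ_K, τ_K] → ℂ^{2n} with φ in the domain of 𝓗 (i.e., φ'(0) = H₀φ(0) + Σₖ(H₋ₖφ(-τₖ) + Hₖφ(τₖ))) and ψ in the domain of 𝓖 (i.e., -ψ'(0) = H₀ᵀψ(0) + Σₖ(Hₖᵀψ(-τₖ) + H₋ₖᵀψ(τₖ))), the bilinear form identity [φ', ψ] = [φ, -ψ'] holds, where [φ, ψ] := ψ(0)ᵀφ(0) + Σₖ(∫₀^{τₖ} ψ(θ)ᵀH₋ₖφ(θ-τₖ)dθ - ∫₀^{τₖ} ψ(θ-τₖ)ᵀHₖφ(θ)dθ). -/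
open Matrix Set intervalIntegral


variable {ι : Type*} [Fintype ι]

lemma dot_hasDerivAt {u v : ℝ → ι → ℂ} {ud vd : ι → ℂ} {x : ℝ}
    (hu : HasDerivAt u ud x) (hv : HasDerivAt v vd x) :
    HasDerivAt (fun y => u y ⬝ᵥ v y) (ud ⬝ᵥ v x + u x ⬝ᵥ vd) x := by
  simp only [dotProduct]
  rw [← Finset.sum_add_distrib]
  exact HasDerivAt.fun_sum fun i _ => (hasDerivAt_pi.1 hu i).mul (hasDerivAt_pi.1 hv i)

lemma mulVec_hasDerivAt {v : ℝ → ι → ℂ} {vd : ι → ℂ} {x : ℝ} (M : Matrix ι ι ℂ)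
    (hv : HasDerivAt v vd x) :
    HasDerivAt (fun y => M *ᵥ v y) (M *ᵥ vd) x := by
  rw [hasDerivAt_pi] at hv ⊢
  intro i
  simp only [mulVec, dotProduct]
  exact HasDerivAt.fun_sum fun j _ => (hv j).const_mul (M i j)

lemma shift_hasDerivAt {f : ℝ → ι → ℂ} {fd : ℝ → ι → ℂ} {x a : ℝ}
    (hf : HasDerivAt f (fd (x + a)) (x + a)) :
    HasDerivAt (fun θ => f (θ + a)) (fd (x + a)) x := by
  have := HasDerivAt.scomp (h := fun θ : ℝ => θ + a) (x := x) hf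
    ((hasDerivAt_id x).add_const a)
  rw [one_smul] at this
  exact this

lemma ibp (M : Matrix ι ι ℝ) {T t : ℝ} (ht0 : 0 < t)
    {f g fd gd : ℝ → ι → ℂ}
    (hf : ∀ θ ∈ Icc (-T) T, HasDerivWithinAt f (fd θ) (Icc (-T) T) θ)
    (hg : ∀ θ ∈ Icc (-T) T, HasDerivWithinAt g (gd θ) (Icc (-T) T) θ)
    (hfd : ContinuousOn fd (Icc (-T) T))
    (hgd : ContinuousOn gd (Icc (-T) T))
    (a b : ℝ)
    (haI : ∀ θ ∈ Icc (0:ℝ) t, θ + a ∈ Icc (-T) T)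
    (haO : ∀ θ ∈ Ioo (0:ℝ) t, θ + a ∈ Ioo (-T) T)
    (hbI : ∀ θ ∈ Icc (0:ℝ) t, θ + b ∈ Icc (-T) T)
    (hbO : ∀ θ ∈ Ioo (0:ℝ) t, θ + b ∈ Ioo (-T) T) :
    (∫ θ in (0:ℝ)..t, g (θ + a) ⬝ᵥ (M.map ((↑) : ℝ → ℂ) *ᵥ fd (θ + b)))
      = g (t + a) ⬝ᵥ (M.map ((↑) : ℝ → ℂ) *ᵥ f (t + b))
        - g (0 + a) ⬝ᵥ (M.map ((↑) : ℝ → ℂ) *ᵥ f (0 + b))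
        - ∫ θ in (0:ℝ)..t, gd (θ + a) ⬝ᵥ (M.map ((↑) : ℝ → ℂ) *ᵥ f (θ + b)) := by
  set Mc : Matrix ι ι ℂ := M.map ((↑) : ℝ → ℂ) with hMc
  have hfc : ContinuousOn f (Icc (-T) T) := fun θ hθ => (hf θ hθ).continuousWithinAt
  have hgc : ContinuousOn g (Icc (-T) T) := fun θ hθ => (hg θ hθ).continuousWithinAt
  have comb : Continuous fun p : (ι → ℂ) × (ι → ℂ) => p.1 ⬝ᵥ (Mc *ᵥ p.2) :=
    continuous_fst.dotProduct (continuous_const.matrix_mulVec continuous_snd)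
  have hshift : ∀ (c : ℝ), Continuous fun θ : ℝ => θ + c := fun c =>
    continuous_id.add continuous_const
  have contOf : ∀ (u v : ℝ → ι → ℂ), ContinuousOn u (Icc (-T) T) →
      ContinuousOn v (Icc (-T) T) →
      ContinuousOn (fun θ => u (θ + a) ⬝ᵥ (Mc *ᵥ v (θ + b))) (Icc (0:ℝ) t) := by
    intro u v hu hv
    exact comb.comp_continuousOn
      (((hu.comp (hshift a).continuousOn haI)).prodMk
        ((hv.comp (hshift b).continuousOn hbI)))
  have int1 : IntervalIntegrable (fun θ => g (θ + a) ⬝ᵥ (Mc *ᵥ fd (θ + b)))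
      MeasureTheory.volume 0 t := by
    exact ContinuousOn.intervalIntegrable (by rw [uIcc_of_le ht0.le]; exact contOf g fd hgc hfd)
  have int2 : IntervalIntegrable (fun θ => gd (θ + a) ⬝ᵥ (Mc *ᵥ f (θ + b)))
      MeasureTheory.volume 0 t := by
    exact ContinuousOn.intervalIntegrable (by rw [uIcc_of_le ht0.le]; exact contOf gd f hgd hfc)
  have ftc : (∫ θ in (0:ℝ)..t, (gd (θ + a) ⬝ᵥ (Mc *ᵥ f (θ + b))
        + g (θ + a) ⬝ᵥ (Mc *ᵥ fd (θ + b))))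
      = g (t + a) ⬝ᵥ (Mc *ᵥ f (t + b)) - g (0 + a) ⬝ᵥ (Mc *ᵥ f (0 + b)) := by
    apply intervalIntegral.integral_eq_sub_of_hasDeriv_right_of_le ht0.le
    · exact contOf g f hgc hfc
    · intro x hx
      have hxa := haO x hx
      have hxb := hbO x hx
      have hga : HasDerivAt g (gd (x + a)) (x + a) :=
        (hg _ (Ioo_subset_Icc_self hxa)).hasDerivAt (Icc_mem_nhds hxa.1 hxa.2)
      have hfb : HasDerivAt f (fd (x + b)) (x + b) :=
        (hf _ (Ioo_subset_Icc_self hxb)).hasDerivAt (Icc_mem_nhds hxb.1 hxb.2)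
      have h1 : HasDerivAt (fun θ => g (θ + a)) (gd (x + a)) x := shift_hasDerivAt hga
      have h2 : HasDerivAt (fun θ => f (θ + b)) (fd (x + b)) x := shift_hasDerivAt hfb
      have h3 : HasDerivAt (fun θ => Mc *ᵥ f (θ + b)) (Mc *ᵥ fd (x + b)) x :=
        mulVec_hasDerivAt Mc h2
      exact ((dot_hasDerivAt h1 h3)).hasDerivWithinAt
    · exact (int2.add int1)
  rw [intervalIntegral.integral_add int2 int1] at ftc
  linear_combination ftc

lemma dot_sum {κ : Type*} (v : ι → ℂ) (s : Finset κ) (w : κ → ι → ℂ) :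
    v ⬝ᵥ (∑ k ∈ s, w k) = ∑ k ∈ s, v ⬝ᵥ w k := by
  simp only [dotProduct, Finset.sum_apply, Finset.mul_sum]
  exact Finset.sum_comm

lemma sum_dot {κ : Type*} (v : ι → ℂ) (s : Finset κ) (w : κ → ι → ℂ) :
    (∑ k ∈ s, w k) ⬝ᵥ v = ∑ k ∈ s, w k ⬝ᵥ v := by
  simp only [dotProduct, Finset.sum_apply, Finset.sum_mul]
  exact Finset.sum_comm

lemma transp_dot (A : Matrix ι ι ℝ) (v w : ι → ℂ) :
    ((Aᵀ).map ((↑) : ℝ → ℂ) *ᵥ v) ⬝ᵥ w = v ⬝ᵥ (A.map ((↑) : ℝ → ℂ) *ᵥ w) := by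
  rw [Matrix.transpose_map, Matrix.mulVec_transpose, ← Matrix.dotProduct_mulVec]

/-- The bilinear form [φ, ψ] = ψ(0)ᵀφ(0)
    + Σₖ (∫₀^{τₖ} ψ(θ)ᵀ H₋ₖ φ(θ-τₖ) dθ - ∫₀^{τₖ} ψ(θ-τₖ)ᵀ Hₖ φ(θ) dθ). -/
noncomputable def bil {n K : ℕ}
    (Hp Hm : Fin (K + 1) → Matrix (Fin n ⊕ Fin n) (Fin n ⊕ Fin n) ℝ)
    (τ : Fin (K + 1) → ℝ)
    (φ ψ : ℝ → ((Fin n ⊕ Fin n) → ℂ)) : ℂ :=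
  ψ 0 ⬝ᵥ φ 0 +
    ∑ k, ((∫ θ in (0:ℝ)..(τ k), ψ θ ⬝ᵥ ((Hm k).map ((↑) : ℝ → ℂ) *ᵥ φ (θ - τ k)))
        - ∫ θ in (0:ℝ)..(τ k), ψ (θ - τ k) ⬝ᵥ ((Hp k).map ((↑) : ℝ → ℂ) *ᵥ φ θ))

theorem stmt7 {n K : ℕ}
    (H0 : Matrix (Fin n ⊕ Fin n) (Fin n ⊕ Fin n) ℝ)
    (Hp Hm : Fin (K + 1) → Matrix (Fin n ⊕ Fin n) (Fin n ⊕ Fin n) ℝ)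
    (τ : Fin (K + 1) → ℝ) (hτpos : ∀ k, 0 < τ k) (hτmono : StrictMono τ)
    (τK : ℝ) (hτK : τK = τ (Fin.last K))
    (φ ψ φd ψd : ℝ → ((Fin n ⊕ Fin n) → ℂ))
    (hφ : ∀ θ ∈ Icc (-τK) τK, HasDerivWithinAt φ (φd θ) (Icc (-τK) τK) θ)
    (hψ : ∀ θ ∈ Icc (-τK) τK, HasDerivWithinAt ψ (ψd θ) (Icc (-τK) τK) θ)
    (hφd : ContinuousOn φd (Icc (-τK) τK))
    (hψd : ContinuousOn ψd (Icc (-τK) τK))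
    (hdomφ : φd 0 = H0.map ((↑) : ℝ → ℂ) *ᵥ φ 0
        + ∑ k, ((Hm k).map ((↑) : ℝ → ℂ) *ᵥ φ (-(τ k))
              + (Hp k).map ((↑) : ℝ → ℂ) *ᵥ φ (τ k)))
    (hdomψ : -ψd 0 = (H0ᵀ).map ((↑) : ℝ → ℂ) *ᵥ ψ 0
        + ∑ k, (((Hp k)ᵀ).map ((↑) : ℝ → ℂ) *ᵥ ψ (-(τ k))
              + ((Hm k)ᵀ).map ((↑) : ℝ → ℂ) *ᵥ ψ (τ k))) :
    bil Hp Hm τ φd ψ = bil Hp Hm τ φ (fun θ => -ψd θ) := by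
  have hT0 : 0 < τK := hτK ▸ hτpos _
  have hkT : ∀ k, τ k ≤ τK := fun k => hτK ▸ hτmono.monotone (Fin.le_last k)
  -- interval membership side conditions
  have haI0 : ∀ k : Fin (K+1), ∀ θ ∈ Icc (0:ℝ) (τ k), θ + 0 ∈ Icc (-τK) τK := by
    intro k θ hθ; simp only [mem_Icc] at *
    constructor <;> nlinarith [hkT k, (hτpos k).le]
  have haO0 : ∀ k : Fin (K+1), ∀ θ ∈ Ioo (0:ℝ) (τ k), θ + 0 ∈ Ioo (-τK) τK := by
    intro k θ hθ; simp only [mem_Ioo] at *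
    constructor <;> nlinarith [hkT k, (hτpos k).le]
  have haIn : ∀ k : Fin (K+1), ∀ θ ∈ Icc (0:ℝ) (τ k), θ + -(τ k) ∈ Icc (-τK) τK := by
    intro k θ hθ; simp only [mem_Icc] at *
    constructor <;> nlinarith [hkT k, (hτpos k).le]
  have haOn : ∀ k : Fin (K+1), ∀ θ ∈ Ioo (0:ℝ) (τ k), θ + -(τ k) ∈ Ioo (-τK) τK := by
    intro k θ hθ; simp only [mem_Ioo] at *
    constructor <;> nlinarith [hkT k, (hτpos k).le]
  have hAk : ∀ k : Fin (K+1),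
      (∫ θ in (0:ℝ)..(τ k), ψ θ ⬝ᵥ ((Hm k).map ((↑) : ℝ → ℂ) *ᵥ φd (θ - τ k)))
      = ψ (τ k) ⬝ᵥ ((Hm k).map ((↑) : ℝ → ℂ) *ᵥ φ 0)
        - ψ 0 ⬝ᵥ ((Hm k).map ((↑) : ℝ → ℂ) *ᵥ φ (-(τ k)))
        - ∫ θ in (0:ℝ)..(τ k), ψd θ ⬝ᵥ ((Hm k).map ((↑) : ℝ → ℂ) *ᵥ φ (θ - τ k)) := by
    intro k
    have h := ibp (Hm k) (hτpos k) hφ hψ hφd hψd 0 (-(τ k))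
      (haI0 k) (haO0 k) (haIn k) (haOn k)
    simp only [add_zero, zero_add, ← sub_eq_add_neg, sub_self, zero_sub] at h
    simpa [sub_eq_add_neg] using h
  have hBk : ∀ k : Fin (K+1),
      (∫ θ in (0:ℝ)..(τ k), ψ (θ - τ k) ⬝ᵥ ((Hp k).map ((↑) : ℝ → ℂ) *ᵥ φd θ))
      = ψ 0 ⬝ᵥ ((Hp k).map ((↑) : ℝ → ℂ) *ᵥ φ (τ k))
        - ψ (-(τ k)) ⬝ᵥ ((Hp k).map ((↑) : ℝ → ℂ) *ᵥ φ 0)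
        - ∫ θ in (0:ℝ)..(τ k), ψd (θ - τ k) ⬝ᵥ ((Hp k).map ((↑) : ℝ → ℂ) *ᵥ φ θ) := by
    intro k
    have h := ibp (Hp k) (hτpos k) hφ hψ hφd hψd (-(τ k)) 0
      (haIn k) (haOn k) (haI0 k) (haO0 k)
    simp only [add_zero, zero_add, ← sub_eq_add_neg, sub_self, zero_sub] at h
    simpa [sub_eq_add_neg] using h
  have key : ψ 0 ⬝ᵥ φd 0
      + ∑ k : Fin (K+1), (ψ (τ k) ⬝ᵥ ((Hm k).map ((↑) : ℝ → ℂ) *ᵥ φ 0)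
          - ψ 0 ⬝ᵥ ((Hm k).map ((↑) : ℝ → ℂ) *ᵥ φ (-(τ k)))
          - ψ 0 ⬝ᵥ ((Hp k).map ((↑) : ℝ → ℂ) *ᵥ φ (τ k))
          + ψ (-(τ k)) ⬝ᵥ ((Hp k).map ((↑) : ℝ → ℂ) *ᵥ φ 0))
      = -(ψd 0 ⬝ᵥ φ 0) := by
    have h1 : ψ 0 ⬝ᵥ φd 0
        = ψ 0 ⬝ᵥ (H0.map ((↑) : ℝ → ℂ) *ᵥ φ 0)
          + ∑ k : Fin (K+1), (ψ 0 ⬝ᵥ ((Hm k).map ((↑) : ℝ → ℂ) *ᵥ φ (-(τ k)))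
            + ψ 0 ⬝ᵥ ((Hp k).map ((↑) : ℝ → ℂ) *ᵥ φ (τ k))) := by
      rw [hdomφ, dotProduct_add, dot_sum]
      simp [dotProduct_add]
    have h2 : -(ψd 0 ⬝ᵥ φ 0)
        = ψ 0 ⬝ᵥ (H0.map ((↑) : ℝ → ℂ) *ᵥ φ 0)
          + ∑ k : Fin (K+1), (ψ (-(τ k)) ⬝ᵥ ((Hp k).map ((↑) : ℝ → ℂ) *ᵥ φ 0)
            + ψ (τ k) ⬝ᵥ ((Hm k).map ((↑) : ℝ → ℂ) *ᵥ φ 0)) := by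
      rw [← neg_dotProduct, hdomψ, add_dotProduct, sum_dot, transp_dot]
      simp [add_dotProduct, transp_dot]
    rw [h1, h2, add_assoc, ← Finset.sum_add_distrib]
    congr 1
    apply Finset.sum_congr rfl
    intro k _
    ring
  rw [bil, bil]
  simp only [neg_dotProduct, intervalIntegral.integral_neg]
  rw [Finset.sum_congr rfl (fun k _ => by rw [hAk k, hBk k])]
  have hexp : ∀ a b c d X Y : ℂ, (a - b - X) - (c - d - Y) = (a - b - c + d) + ((-X) - (-Y)) := by
    intros; ring
  simp only [hexp]
  rw [Finset.sum_add_distrib]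
  linear_combination key
end

section
/- Suppose T(jω) = C(jωI - A₀ - Σₖ Aₖe^{-jωτₖ})⁻¹B has a singular value equal to γ > 0 for some real ω; equivalently there exist nonzero u, y with T(jω)u = γy and T(jω)*y = γu. Then jω is an eigenvalue of the characteristic matrix M(λ) = λI₂ₙ - [[A₀, γ⁻¹BBᵀ], [-γ⁻¹CᵀC, -A₀ᵀ]] - Σₖ([[Aₖ, 0],[0,0]]e^{-λτₖ} + [[0,0],[0,-Aₖᵀ]]e^{λτₖ}), i.e., det M(jω) = 0. -/
open Matrix

theorem stmt19 {n m p K : ℕ}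
    (A0 : Matrix (Fin n) (Fin n) ℝ) (A : Fin (K + 1) → Matrix (Fin n) (Fin n) ℝ)
    (B : Matrix (Fin n) (Fin m) ℝ) (C : Matrix (Fin p) (Fin n) ℝ)
    (τ : Fin (K + 1) → ℝ) (hτpos : ∀ k, 0 < τ k) (hτmono : StrictMono τ)
    (γ : ℝ) (hγ : 0 < γ) (ω : ℝ)
    (D : Matrix (Fin n) (Fin n) ℂ)
    (hD : D = (Complex.I * ω) • (1 : Matrix (Fin n) (Fin n) ℂ)
        - A0.map ((↑) : ℝ → ℂ)
        - ∑ k, Complex.exp (-(Complex.I * ω) * τ k) • (A k).map ((↑) : ℝ → ℂ))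
    (hDunit : IsUnit D)
    (T : Matrix (Fin p) (Fin m) ℂ)
    (hT : T = C.map ((↑) : ℝ → ℂ) * D⁻¹ * B.map ((↑) : ℝ → ℂ))
    (u : Fin m → ℂ) (y : Fin p → ℂ) (hu : u ≠ 0) (hy : y ≠ 0)
    (hsv1 : T *ᵥ u = (γ : ℂ) • y) (hsv2 : Tᴴ *ᵥ y = (γ : ℂ) • u) :
    ((Complex.I * ω) • (1 : Matrix (Fin n ⊕ Fin n) (Fin n ⊕ Fin n) ℂ)
      - Matrix.fromBlocks
          (A0.map ((↑) : ℝ → ℂ))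
          ((γ : ℂ)⁻¹ • (B.map ((↑) : ℝ → ℂ) * (B.map ((↑) : ℝ → ℂ))ᵀ))
          (-((γ : ℂ)⁻¹ • ((C.map ((↑) : ℝ → ℂ))ᵀ * C.map ((↑) : ℝ → ℂ))))
          (-(A0.map ((↑) : ℝ → ℂ))ᵀ)
      - ∑ k, (Complex.exp (-(Complex.I * ω) * τ k) •
                Matrix.fromBlocks ((A k).map ((↑) : ℝ → ℂ)) 0 0 0
            + Complex.exp ((Complex.I * ω) * τ k) •
                Matrix.fromBlocks 0 0 0 (-((A k).map ((↑) : ℝ → ℂ))ᵀ))).det = 0 := by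
  set B' : Matrix (Fin n) (Fin m) ℂ := B.map ((↑) : ℝ → ℂ) with hB'
  set C' : Matrix (Fin p) (Fin n) ℂ := C.map ((↑) : ℝ → ℂ) with hC'
  have hγ0 : (γ : ℂ) ≠ 0 := by exact_mod_cast hγ.ne'
  -- the big matrix equals a block matrix in terms of D
  have hM : ((Complex.I * ω) • (1 : Matrix (Fin n ⊕ Fin n) (Fin n ⊕ Fin n) ℂ)
      - Matrix.fromBlocks
          (A0.map ((↑) : ℝ → ℂ))
          ((γ : ℂ)⁻¹ • (B' * B'ᵀ))
          (-((γ : ℂ)⁻¹ • (C'ᵀ * C')))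
          (-(A0.map ((↑) : ℝ → ℂ))ᵀ)
      - ∑ k, (Complex.exp (-(Complex.I * ω) * τ k) •
                Matrix.fromBlocks ((A k).map ((↑) : ℝ → ℂ)) 0 0 0
            + Complex.exp ((Complex.I * ω) * τ k) •
                Matrix.fromBlocks 0 0 0 (-((A k).map ((↑) : ℝ → ℂ))ᵀ)))
      = Matrix.fromBlocks D (-((γ : ℂ)⁻¹ • (B' * B'ᵀ))) ((γ : ℂ)⁻¹ • (C'ᵀ * C')) (-Dᴴ) := by
    subst hD
    ext i j
    rcases i with i | i <;> rcases j with j | j <;>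
      simp [Matrix.fromBlocks, Matrix.sum_apply, Matrix.one_apply, Matrix.conjTranspose_apply,
        Matrix.map_apply, Matrix.transpose_apply, ← Complex.exp_conj, _root_.map_mul, map_neg,
        Complex.conj_I, Finset.sum_add_distrib, mul_comm, sub_eq_add_neg, neg_add,
        Finset.sum_neg_distrib, apply_ite (starRingEnd ℂ), add_comm, add_left_comm]
  rw [hM, ← Matrix.exists_mulVec_eq_zero_iff]
  have hDdet : IsUnit D.det := (Matrix.isUnit_iff_isUnit_det D).mp hDunit
  have hDH : IsUnit Dᴴ.det := by
    rw [Matrix.det_conjTranspose]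
    exact hDdet.star
  set x : Fin n → ℂ := D⁻¹ *ᵥ (B' *ᵥ u) with hx
  set w : Fin n → ℂ := Dᴴ⁻¹ *ᵥ (C'ᵀ *ᵥ y) with hw
  have hDx : D *ᵥ x = B' *ᵥ u := by
    rw [hx, Matrix.mulVec_mulVec, Matrix.mul_nonsing_inv _ hDdet, Matrix.one_mulVec]
  have hDw : Dᴴ *ᵥ w = C'ᵀ *ᵥ y := by
    rw [hw, Matrix.mulVec_mulVec, Matrix.mul_nonsing_inv _ hDH, Matrix.one_mulVec]
  have hCx : C' *ᵥ x = (γ : ℂ) • y := by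
    rw [hx, Matrix.mulVec_mulVec, Matrix.mulVec_mulVec, ← hT, hsv1]
  have hBw : B'ᵀ *ᵥ w = (γ : ℂ) • u := by
    have hTH : Tᴴ = B'ᵀ * Dᴴ⁻¹ * C'ᵀ := by
      rw [hT, Matrix.conjTranspose_mul, Matrix.conjTranspose_mul,
        Matrix.conjTranspose_nonsing_inv]
      have h1 : B'ᴴ = B'ᵀ := by
        ext i j; simp [hB', Matrix.conjTranspose_apply, Matrix.map_apply]
      have h2 : C'ᴴ = C'ᵀ := by
        ext i j; simp [hC', Matrix.conjTranspose_apply, Matrix.map_apply]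
      rw [h1, h2, Matrix.mul_assoc]
    rw [hw, Matrix.mulVec_mulVec, Matrix.mulVec_mulVec, ← hTH, hsv2]
  refine ⟨Sum.elim x w, ?_, ?_⟩
  · intro hcontr
    have hx0 : x = 0 := by
      funext i; exact congrFun hcontr (Sum.inl i)
    rw [hx0, Matrix.mulVec_zero] at hCx
    exact hy ((smul_eq_zero_iff_right hγ0).mp hCx.symm)
  · rw [Matrix.fromBlocks_mulVec]
    have hl : (Sum.elim x w) ∘ Sum.inl = x := rfl
    have hr : (Sum.elim x w) ∘ Sum.inr = w := rfl
    rw [hl, hr, hDx]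
    have e1 : (-((γ : ℂ)⁻¹ • (B' * B'ᵀ))) *ᵥ w = -(B' *ᵥ u) := by
      rw [Matrix.neg_mulVec, Matrix.smul_mulVec, ← Matrix.mulVec_mulVec, hBw,
        Matrix.mulVec_smul, smul_smul, inv_mul_cancel₀ hγ0, one_smul]
    have e2 : ((γ : ℂ)⁻¹ • (C'ᵀ * C')) *ᵥ x = C'ᵀ *ᵥ y := by
      rw [Matrix.smul_mulVec, ← Matrix.mulVec_mulVec, hCx,
        Matrix.mulVec_smul, smul_smul, inv_mul_cancel₀ hγ0, one_smul]
    rw [e1, e2, Matrix.neg_mulVec, hDw]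
    simp
end
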